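/- Let L be a finite-dimensional real vector space, let Ω be an alternating bilinear form on L, let θ > 0, and let H = ℝ × L be the Heisenberg group with multiplication (r,u)·(r̂,û) = (r + r̂ − Ω(u,û), u + û). Let Σ be a subgroup of H such that (θ,0) ∈ Σ and such that, as a subset of the real vector space ℝ × L, Σ equals the ℤ-span of some ℝ-basis of ℝ × L. Then the left-translation action of Σ on ℝ × L is cocompact: there exists a compact set K ⊆ ℝ × L such that for every x ∈ ℝ × L there is s ∈ Σ with s·x ∈ K; in fact K may be taken to be [0,θ] × Q, where Q is the image under the projection ℝ × L → L of a compact fundamental domain for the additive action of Σ on ℝ × L. -/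

import Mathlib

/-!
Σ is an additive lattice, and its Heisenberg left translations agree with additive translations
in the `L`-component. So first translate `x` additively into a compact fundamental domain `D`
of Σ, which fixes the `L`-component in `Prod.snd '' D`; then move the `ℝ`-component into `[0, θ]`
by a central element `(kθ, 0)` of Σ, which acts by ordinary addition.
-/

noncomputable section

/-- The Heisenberg multiplication `(r,u)·(r̂,û) = (r + r̂ − Ω(u,û), u + û)` on `ℝ × L`. -/
def heisMul {L : Type*} [AddCommGroup L] [Module ℝ L]
    (Ω : L →ₗ[ℝ] L →ₗ[ℝ] ℝ) (a b : ℝ × L) : ℝ × L :=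
  (a.1 + b.1 - Ω a.2 b.2, a.2 + b.2)

theorem ZSpan.exists_add_mem_parallelepiped {E ι : Type*} [NormedAddCommGroup E]
    [NormedSpace ℝ E] [Fintype ι] (b : Module.Basis ι ℝ E) (x : E) :
    ∃ s ∈ Submodule.span ℤ (Set.range b), s + x ∈ parallelepiped b := by
  refine ⟨-ZSpan.floor b x, neg_mem (ZSpan.floor b x).2, ?_⟩
  rw [neg_add_eq_sub, ← ZSpan.fract_apply]
  exact ZSpan.fundamentalDomain_subset_parallelepiped b (ZSpan.fract_mem_fundamentalDomain b x)

theorem heisMul_central_add {L : Type*} [AddCommGroup L] [Module ℝ L]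
    (Ω : L →ₗ[ℝ] L →ₗ[ℝ] ℝ) (r : ℝ) (s x : ℝ × L) :
    heisMul Ω ((r, 0) + s) x = (r, 0) + heisMul Ω s x := by
  ext
  · simp only [heisMul, Prod.fst_add, Prod.snd_add, zero_add]
    ring
  · simp only [heisMul, Prod.snd_add, zero_add]

theorem exists_heisMul_mem_Icc_prod {L : Type*} [AddCommGroup L] [Module ℝ L]
    (Ω : L →ₗ[ℝ] L →ₗ[ℝ] ℝ) {θ : ℝ} (hθ : 0 < θ) {Λ : AddSubgroup (ℝ × L)}
    (hθΛ : ((θ, 0) : ℝ × L) ∈ Λ) {D : Set (ℝ × L)} (hD : ∀ x, ∃ s ∈ Λ, s + x ∈ D)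
    (x : ℝ × L) : ∃ s ∈ Λ, heisMul Ω s x ∈ Set.Icc 0 θ ×ˢ (Prod.snd '' D) := by
  obtain ⟨s, hsΛ, hsx⟩ := hD x
  set k := toIcoDiv hθ 0 (heisMul Ω s x).1
  have hk := sub_toIcoDiv_zsmul_mem_Ico hθ 0 (heisMul Ω s x).1
  rw [zero_add] at hk
  refine ⟨(-k) • ((θ, 0) : ℝ × L) + s, add_mem (zsmul_mem hθΛ _) hsΛ, ?_⟩
  rw [Prod.smul_mk, smul_zero, heisMul_central_add]
  refine ⟨?_, s + x, hsx, by simp [heisMul]⟩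
  rw [Prod.fst_add, neg_smul, neg_add_eq_sub]
  exact Set.Ico_subset_Icc_self hk

theorem stmt_14_general {L : Type*} [NormedAddCommGroup L] [NormedSpace ℝ L]
    (Ω : L →ₗ[ℝ] L →ₗ[ℝ] ℝ)
    (θ : ℝ) (hθ : 0 < θ)
    (S : Set (ℝ × L))
    (hθS : ((θ, 0) : ℝ × L) ∈ S)
    (hlat : ∃ b : Module.Basis (Fin (Module.finrank ℝ (ℝ × L))) ℝ (ℝ × L),
      S = ((Submodule.span ℤ (Set.range ⇑b) : Submodule ℤ (ℝ × L)) : Set (ℝ × L))) :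
    (∃ K : Set (ℝ × L), IsCompact K ∧ ∀ x : ℝ × L, ∃ s ∈ S, heisMul Ω s x ∈ K) ∧
    (∀ D : Set (ℝ × L), IsCompact D → (∀ x : ℝ × L, ∃ s ∈ S, s + x ∈ D) →
      ∀ x : ℝ × L, ∃ s ∈ S,
        heisMul Ω s x ∈ (Set.Icc (0 : ℝ) θ) ×ˢ (Prod.snd '' D)) := by
  obtain ⟨b, rfl⟩ := hlat
  set Λ := (Submodule.span ℤ (Set.range b)).toAddSubgroup
  exact ⟨⟨_, isCompact_Icc.prod (b.parallelepiped.isCompact.image continuous_snd),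
      exists_heisMul_mem_Icc_prod Ω hθ (Λ := Λ) hθS (ZSpan.exists_add_mem_parallelepiped b)⟩,
    fun _ _ hD => exists_heisMul_mem_Icc_prod Ω hθ (Λ := Λ) hθS hD⟩

/-- A lattice `Σ` in the Heisenberg group `H = ℝ × L` containing `(θ,0)` acts cocompactly on
`ℝ × L` by Heisenberg left translations; in fact `K` may be taken to be `[0,θ] × Q`, where
`Q` is the image under the projection `ℝ × L → L` of a compact fundamental domain for the
additive action of `Σ`. -/
theorem stmt_14 {L : Type*} [NormedAddCommGroup L] [NormedSpace ℝ L] [FiniteDimensional ℝ L]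
    (Ω : L →ₗ[ℝ] L →ₗ[ℝ] ℝ) (hΩalt : ∀ u : L, Ω u u = 0)
    (θ : ℝ) (hθ : 0 < θ)
    (S : Set (ℝ × L))
    (hmul : ∀ a ∈ S, ∀ b ∈ S, heisMul Ω a b ∈ S)
    (hinv : ∀ a ∈ S, -a ∈ S)
    (hθS : ((θ, 0) : ℝ × L) ∈ S)
    (hlat : ∃ b : Module.Basis (Fin (Module.finrank ℝ (ℝ × L))) ℝ (ℝ × L),
      S = ((Submodule.span ℤ (Set.range ⇑b) : Submodule ℤ (ℝ × L)) : Set (ℝ × L))) :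
    (∃ K : Set (ℝ × L), IsCompact K ∧ ∀ x : ℝ × L, ∃ s ∈ S, heisMul Ω s x ∈ K) ∧
    (∀ D : Set (ℝ × L), IsCompact D → (∀ x : ℝ × L, ∃ s ∈ S, s + x ∈ D) →
      ∀ x : ℝ × L, ∃ s ∈ S,
        heisMul Ω s x ∈ (Set.Icc (0 : ℝ) θ) ×ˢ (Prod.snd '' D)) :=
  stmt_14_general Ω θ hθ S hθS hlat
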